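/- Let $n \ge 3$ and let $Y_1, Y_2 \in \mathbb{R}$. Then the infimum over $\alpha \in [0,1]$ of $\alpha^{(n-2)/n} Y_1 + (1-\alpha)^{(n-2)/n} Y_2$ equals $-\left(|Y_1|^{n/2} + |Y_2|^{n/2}\right)^{2/n}$ if $Y_1 \le 0$ and $Y_2 \le 0$, and equals $\min\{Y_1, Y_2\}$ otherwise. -/

import Mathlib

open Real Set

/-!
With `p + q = 1`, the value `α ^ p * a + (1 - α) ^ p * b` for `a, b ≥ 0` is bounded by
`(a ^ q⁻¹ + b ^ q⁻¹) ^ q` by Hölder's inequality for the conjugate exponents `p⁻¹, q⁻¹`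
applied to `(α ^ p, (1 - α) ^ p)` and `(a, b)`, with equality at `α = a ^ q⁻¹ / (a ^ q⁻¹ + b ^ q⁻¹)`;
this gives the infimum when `Y₁, Y₂ ≤ 0`. Otherwise `α ≤ α ^ p ≤ 1` shows that the function never
drops below `min Y₁ Y₂`, which is its value at an endpoint.
-/

section
variable {p q : ℝ}

theorem rpow_mul_add_rpow_mul_le (hp : 0 < p) (hq : 0 < q) (hpq : p + q = 1) {a b α : ℝ}
    (ha : 0 ≤ a) (hb : 0 ≤ b) (hα₀ : 0 ≤ α) (hα₁ : α ≤ 1) :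
    α ^ p * a + (1 - α) ^ p * b ≤ (a ^ q⁻¹ + b ^ q⁻¹) ^ q := by
  have holder := inner_le_Lp_mul_Lq_of_nonneg Finset.univ (.inv_inv hp hq hpq)
    (f := ![α ^ p, (1 - α) ^ p]) (g := ![a, b])
    (by simp [Fin.forall_fin_two, rpow_nonneg hα₀, rpow_nonneg (sub_nonneg.2 hα₁)])
    (by simp [Fin.forall_fin_two, ha, hb])
  simpa [Fin.sum_univ_two, rpow_rpow_inv hα₀ hp.ne', rpow_rpow_inv (sub_nonneg.2 hα₁) hp.ne']
    using holder

theorem rpow_div_mul_self (hq : 0 < q) (hpq : p + q = 1) {S y : ℝ} (hS : 0 ≤ S) (hy : 0 ≤ y) :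
    (y ^ q⁻¹ / S) ^ p * y = y ^ q⁻¹ / S ^ p := by
  rcases hy.eq_or_lt with rfl | hy
  · simp [zero_rpow (inv_ne_zero hq.ne')]
  · rw [div_rpow (by positivity) hS, div_mul_eq_mul_div, ← rpow_mul hy.le,
      ← rpow_add_one hy.ne']
    congr 2
    field_simp
    linarith

theorem exists_rpow_mul_add_rpow_mul_eq (hq : 0 < q) (hpq : p + q = 1) {a b : ℝ}
    (ha : 0 ≤ a) (hb : 0 ≤ b) :
    ∃ α ∈ Icc (0 : ℝ) 1, α ^ p * a + (1 - α) ^ p * b = (a ^ q⁻¹ + b ^ q⁻¹) ^ q := by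
  set S := a ^ q⁻¹ + b ^ q⁻¹
  have hA : 0 ≤ a ^ q⁻¹ := rpow_nonneg ha _
  have hB : 0 ≤ b ^ q⁻¹ := rpow_nonneg hb _
  rcases (add_nonneg hA hB).eq_or_lt with hS | hS
  · have hq' : q⁻¹ ≠ 0 := inv_ne_zero hq.ne'
    obtain rfl : a = 0 := (rpow_eq_zero ha hq').1 (by linarith)
    obtain rfl : b = 0 := (rpow_eq_zero hb hq').1 (by linarith)
    exact ⟨0, left_mem_Icc.2 zero_le_one, by rw [show S = 0 from hS.symm, zero_rpow hq.ne']; simp⟩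
  refine ⟨a ^ q⁻¹ / S, ⟨by positivity, div_le_one_of_le₀ (by linarith) hS.le⟩, ?_⟩
  have hβ : 1 - a ^ q⁻¹ / S = b ^ q⁻¹ / S := by
    rw [eq_div_iff hS.ne', sub_mul, div_mul_cancel₀ _ hS.ne']
    ring
  rw [hβ,
    rpow_div_mul_self hq hpq hS.le ha, rpow_div_mul_self hq hpq hS.le hb, ← add_div,
    div_eq_iff (rpow_pos_of_pos hS p).ne', ← rpow_add hS, add_comm q, hpq, rpow_one]

theorem min_le_rpow_mul_add_rpow_mul (hp₀ : 0 ≤ p) (hp₁ : p ≤ 1) {Y₁ Y₂ α : ℝ}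
    (hY : 0 ≤ Y₁ ∨ 0 ≤ Y₂) (hα₀ : 0 ≤ α) (hα₁ : α ≤ 1) :
    min Y₁ Y₂ ≤ α ^ p * Y₁ + (1 - α) ^ p * Y₂ := by
  have hβ₀ : 0 ≤ 1 - α := sub_nonneg.2 hα₁
  have hβ₁ : 1 - α ≤ 1 := by linarith
  have hαp : α ^ p ≤ 1 := rpow_le_one hα₀ hα₁ hp₀
  have hβp : (1 - α) ^ p ≤ 1 := rpow_le_one hβ₀ hβ₁ hp₀
  have hα_le : α ≤ α ^ p := self_le_rpow_of_le_one hα₀ hα₁ hp₁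
  have hβ_le : 1 - α ≤ (1 - α) ^ p := self_le_rpow_of_le_one hβ₀ hβ₁ hp₁
  have h₁ := min_le_left Y₁ Y₂
  have h₂ := min_le_right Y₁ Y₂
  rcases le_total 0 Y₁ with hY₁ | hY₁ <;> rcases le_total 0 Y₂ with hY₂ | hY₂ <;>
    rcases hY with hY | hY <;> nlinarith

theorem sInf_image_rpow_mul_add_rpow_mul (hp : 0 < p) (hq : 0 < q) (hpq : p + q = 1)
    (Y₁ Y₂ : ℝ) :
    sInf ((fun α : ℝ => α ^ p * Y₁ + (1 - α) ^ p * Y₂) '' Icc 0 1) =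
      if Y₁ ≤ 0 ∧ Y₂ ≤ 0 then -(|Y₁| ^ q⁻¹ + |Y₂| ^ q⁻¹) ^ q else min Y₁ Y₂ := by
  refine IsLeast.csInf_eq ?_
  split_ifs with hY
  · obtain ⟨hY₁, hY₂⟩ := hY
    obtain ⟨a, ha, rfl⟩ : ∃ a, 0 ≤ a ∧ Y₁ = -a := ⟨-Y₁, by linarith, by ring⟩
    obtain ⟨b, hb, rfl⟩ : ∃ b, 0 ≤ b ∧ Y₂ = -b := ⟨-Y₂, by linarith, by ring⟩
    simp only [abs_neg, abs_of_nonneg ha, abs_of_nonneg hb, mul_neg, ← neg_add]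
    refine ⟨?_, ?_⟩
    · obtain ⟨α, hα, hαeq⟩ := exists_rpow_mul_add_rpow_mul_eq hq hpq ha hb
      exact ⟨α, hα, congrArg Neg.neg hαeq⟩
    · rintro _ ⟨α, ⟨hα₀, hα₁⟩, rfl⟩
      exact neg_le_neg (rpow_mul_add_rpow_mul_le hp hq hpq ha hb hα₀ hα₁)
  · refine ⟨?_, ?_⟩
    · rcases min_choice Y₁ Y₂ with h | h <;> rw [h]
      · exact ⟨1, right_mem_Icc.2 zero_le_one, by simp [zero_rpow hp.ne']⟩
      · exact ⟨0, left_mem_Icc.2 zero_le_one, by simp [zero_rpow hp.ne']⟩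
    · rintro _ ⟨α, ⟨hα₀, hα₁⟩, rfl⟩
      refine min_le_rpow_mul_add_rpow_mul hp.le (by linarith) ?_ hα₀ hα₁
      by_contra! h
      exact hY ⟨h.1.le, h.2.le⟩

end

/-- infimum over `α ∈ [0,1]` of
`α^((n-2)/n) Y₁ + (1-α)^((n-2)/n) Y₂`. -/
theorem stmt0 (n : ℕ) (hn : 3 ≤ n) (Y₁ Y₂ : ℝ) :
    sInf ((fun α : ℝ => α ^ (((n : ℝ) - 2) / n) * Y₁ +
        (1 - α) ^ (((n : ℝ) - 2) / n) * Y₂) '' Set.Icc (0:ℝ) 1) =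
      if Y₁ ≤ 0 ∧ Y₂ ≤ 0 then
        -((|Y₁| ^ ((n : ℝ) / 2) + |Y₂| ^ ((n : ℝ) / 2)) ^ (2 / (n : ℝ)))
      else min Y₁ Y₂ := by
  have hn' : (3 : ℝ) ≤ n := by exact_mod_cast hn
  have hpq : ((n : ℝ) - 2) / n + 2 / n = 1 := by field_simp; ring
  rw [← inv_div 2 (n : ℝ)]
  exact sInf_image_rpow_mul_add_rpow_mul (div_pos (by linarith) (by linarith))
    (div_pos two_pos (by linarith)) hpq Y₁ Y₂
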